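/- Let Σ = (X, 𝒰, φ) be a monotone-w.r.t.-inputs control system with 𝒰(x) = 𝒰, and suppose conditions (i) and (ii) of the previous statement hold with ρ linear. Then Σ is exponentially ISS if and only if Σ is exponentially ISS with respect to inputs in 𝒰_c. If moreover η is linear and Σ is exp-ISS w.r.t. 𝒰_c with a linear gain, then Σ is exp-ISS with a linear gain. -/

import Mathlib

/-- Class `K`: continuous, strictly increasing, zero at zero. -/
def ClassK (γ : NNReal → NNReal) : Prop :=
  Continuous γ ∧ StrictMono γ ∧ γ 0 = 0

/-- Class `K∞`: class `K` and unbounded. -/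
def ClassKInf (γ : NNReal → NNReal) : Prop :=
  ClassK γ ∧ ∀ M : NNReal, ∃ r : NNReal, M < γ r

/-- Exponential ISS with respect to a class of inputs `S` (all inputs admissible). -/
def ExpISSOn {X U : Type*} [NormedAddCommGroup X] [NormedAddCommGroup U]
    (φ : NNReal → X → U → X) (S : Set U) : Prop :=
  ∃ M a : ℝ, 0 < M ∧ 0 < a ∧ ∃ γ, ClassKInf γ ∧
    ∀ (x : X), ∀ u ∈ S, ∀ t : NNReal,
      ‖φ t x u‖ ≤ M * Real.exp (-a * t) * ‖x‖ + (γ ‖u‖₊ : ℝ)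

/-- Exponential ISS with a linear gain, with respect to a class of inputs `S`. -/
def ExpISSLinOn {X U : Type*} [NormedAddCommGroup X] [NormedAddCommGroup U]
    (φ : NNReal → X → U → X) (S : Set U) : Prop :=
  ∃ M a c : ℝ, 0 < M ∧ 0 < a ∧ 0 ≤ c ∧
    ∀ (x : X), ∀ u ∈ S, ∀ t : NNReal,
      ‖φ t x u‖ ≤ M * Real.exp (-a * t) * ‖x‖ + c * ‖u‖


/-! Monotonicity sandwiches the trajectory driven by an arbitrary input `u` between the
trajectories driven by `um ≤ u ≤ up` from `Uc`, whose norms are controlled by `η ‖u‖`.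
Condition (i) with linear `ρ` turns the two exp-ISS estimates on `Uc` into one for `u`, with
overshoot `(2 cρ + 1) M` and gain `(2 cρ + 1) γ ∘ η`, which is linear when `γ` and `η` are
(the `+ 1` keeps the constants positive when `cρ = 0`). -/

namespace ClassKInf

variable {γ η : NNReal → NNReal}

theorem monotone (hγ : ClassKInf γ) : Monotone γ :=
  hγ.1.2.1.monotone

theorem comp (hγ : ClassKInf γ) (hη : ClassKInf η) : ClassKInf (γ ∘ η) := by
  obtain ⟨⟨γcont, γmono, γzero⟩, γunb⟩ := hγ
  obtain ⟨⟨ηcont, ηmono, ηzero⟩, ηunb⟩ := hη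
  refine ⟨⟨γcont.comp ηcont, γmono.comp ηmono, by simp [ηzero, γzero]⟩, fun N => ?_⟩
  obtain ⟨s, hs⟩ := γunb N
  obtain ⟨r, hr⟩ := ηunb s
  exact ⟨r, hs.trans (γmono hr)⟩

theorem const_mul (hγ : ClassKInf γ) {c : NNReal} (hc : 0 < c) :
    ClassKInf (fun r => c * γ r) := by
  obtain ⟨⟨γcont, γmono, γzero⟩, γunb⟩ := hγ
  refine ⟨⟨continuous_const.mul γcont, fun r s hrs => mul_lt_mul_of_pos_left (γmono hrs) hc,
    by simp [γzero]⟩, fun N => ?_⟩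
  obtain ⟨r, hr⟩ := γunb (N / c)
  exact ⟨r, (div_lt_iff₀' hc).mp hr⟩

end ClassKInf

theorem ExpISSOn.mono {X U : Type*} [NormedAddCommGroup X] [NormedAddCommGroup U]
    {φ : NNReal → X → U → X} {S T : Set U} (h : ExpISSOn φ S) (hTS : T ⊆ S) :
    ExpISSOn φ T := by
  obtain ⟨M, a, hM, ha, γ, hγ, hbound⟩ := h
  exact ⟨M, a, hM, ha, γ, hγ, fun x u hu => hbound x u (hTS hu)⟩

section Sandwich

variable {X U : Type*} [NormedAddCommGroup X] [Preorder X] [Preorder U]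
  {φ : NNReal → X → U → X} {cρ : NNReal}

theorem norm_apply_le_of_le_of_le (hmono : ∀ t x, Monotone (φ t x))
    (hsandwich : ∀ xm x xp : X, xm ≤ x → x ≤ xp → ‖x‖₊ ≤ cρ * (‖xm‖₊ + ‖xp‖₊))
    {t : NNReal} {x : X} {um u up : U} (hum : um ≤ u) (hup : u ≤ up) {A B : ℝ}
    (hboundm : ‖φ t x um‖ ≤ A + B) (hboundp : ‖φ t x up‖ ≤ A + B) :
    ‖φ t x u‖ ≤ (2 * cρ + 1) * A + (2 * cρ + 1) * B := by
  have hsand : ‖φ t x u‖ ≤ cρ * (‖φ t x um‖ + ‖φ t x up‖) := by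
    exact_mod_cast hsandwich _ _ _ (hmono t x hum) (hmono t x hup)
  have hAB : 0 ≤ A + B := (norm_nonneg _).trans hboundm
  calc ‖φ t x u‖ ≤ cρ * ((A + B) + (A + B)) := hsand.trans (by gcongr)
    _ ≤ (2 * cρ + 1) * A + (2 * cρ + 1) * B := by nlinarith

variable [NormedAddCommGroup U] {Uc : Set U}

theorem ExpISSOn.univ_of_sandwich (hmono : ∀ t x, Monotone (φ t x))
    (hsandwich : ∀ xm x xp : X, xm ≤ x → x ≤ xp → ‖x‖₊ ≤ cρ * (‖xm‖₊ + ‖xp‖₊))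
    {η : NNReal → NNReal} (hη : ClassKInf η)
    (hinput : ∀ u : U, ∃ um ∈ Uc, ∃ up ∈ Uc, um ≤ u ∧ u ≤ up ∧
      ‖um‖₊ ≤ η ‖u‖₊ ∧ ‖up‖₊ ≤ η ‖u‖₊)
    (h : ExpISSOn φ Uc) : ExpISSOn φ Set.univ := by
  obtain ⟨M, a, hM, ha, γ, hγ, hbound⟩ := h
  refine ⟨(2 * cρ + 1) * M, a, by positivity, ha, fun r => (2 * cρ + 1) * (γ ∘ η) r,
    (hγ.comp hη).const_mul (by positivity), fun x u _ t => ?_⟩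
  obtain ⟨um, hum, up, hup, hle, hge, hnormm, hnormp⟩ := hinput u
  have hγη {v : U} (hv : ‖v‖₊ ≤ η ‖u‖₊) : (γ ‖v‖₊ : ℝ) ≤ γ (η ‖u‖₊) := by
    exact_mod_cast hγ.monotone hv
  have key := norm_apply_le_of_le_of_le hmono hsandwich hle hge (B := γ (η ‖u‖₊))
    ((hbound x um hum t).trans (by gcongr; exact hγη hnormm))
    ((hbound x up hup t).trans (by gcongr; exact hγη hnormp))
  simpa [mul_assoc] using key

theorem ExpISSLinOn.univ_of_sandwich (hmono : ∀ t x, Monotone (φ t x))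
    (hsandwich : ∀ xm x xp : X, xm ≤ x → x ≤ xp → ‖x‖₊ ≤ cρ * (‖xm‖₊ + ‖xp‖₊))
    {cη : NNReal}
    (hinput : ∀ u : U, ∃ um ∈ Uc, ∃ up ∈ Uc, um ≤ u ∧ u ≤ up ∧
      ‖um‖₊ ≤ cη * ‖u‖₊ ∧ ‖up‖₊ ≤ cη * ‖u‖₊)
    (h : ExpISSLinOn φ Uc) : ExpISSLinOn φ Set.univ := by
  obtain ⟨M, a, c, hM, ha, hc, hbound⟩ := h
  refine ⟨(2 * cρ + 1) * M, a, (2 * cρ + 1) * (c * cη), by positivity, ha, by positivity,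
    fun x u _ t => ?_⟩
  obtain ⟨um, hum, up, hup, hle, hge, hnormm, hnormp⟩ := hinput u
  have hlin {v : U} (hv : ‖v‖₊ ≤ cη * ‖u‖₊) : ‖v‖ ≤ cη * ‖u‖ := by exact_mod_cast hv
  have key := norm_apply_le_of_le_of_le hmono hsandwich hle hge (B := c * (cη * ‖u‖))
    ((hbound x um hum t).trans (by gcongr; exact hlin hnormm))
    ((hbound x up hup t).trans (by gcongr; exact hlin hnormp))
  simpa [mul_assoc] using key

end Sandwich

theorem stmt_5 {X U : Type*} [NormedAddCommGroup X] [Preorder X]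
    [NormedAddCommGroup U] [Preorder U]
    (φ : NNReal → X → U → X) (Uc : Set U)
    (hmono : ∀ (t : NNReal) (x : X) (u₁ u₂ : U), u₁ ≤ u₂ → φ t x u₁ ≤ φ t x u₂)
    (cρ : NNReal) -- (i) holds with the linear function ρ(s) = cρ · s
    (hsandwich : ∀ xm x xp : X, xm ≤ x → x ≤ xp → ‖x‖₊ ≤ cρ * (‖xm‖₊ + ‖xp‖₊))
    (η : NNReal → NNReal) (hη : ClassKInf η)
    (hinput : ∀ u : U, ∃ um ∈ Uc, ∃ up ∈ Uc, um ≤ u ∧ u ≤ up ∧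
      ‖um‖₊ ≤ η ‖u‖₊ ∧ ‖up‖₊ ≤ η ‖u‖₊) :
    (ExpISSOn φ (Set.univ : Set U) ↔ ExpISSOn φ Uc) ∧
      ((∃ cη : NNReal, ∀ r, η r = cη * r) →
        ExpISSLinOn φ Uc → ExpISSLinOn φ (Set.univ : Set U)) := by
  have hmono' : ∀ t x, Monotone (φ t x) := fun t x _ _ => hmono t x _ _
  refine ⟨⟨fun h => h.mono (Set.subset_univ Uc),
    ExpISSOn.univ_of_sandwich hmono' hsandwich hη hinput⟩, ?_⟩
  rintro ⟨cη, hcη⟩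
  exact ExpISSLinOn.univ_of_sandwich hmono' hsandwich (by simpa only [hcη] using hinput)
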